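/- arXiv:1301.1665 — 3 statements merged into one kernel-verified Lean document; each statement's English description precedes it below -/
import Mathlib

section
/- For every integer a ≥ 1, the alternating sum ∑_{t=0}^{a} (-1)^t π^{binom(t,2)} q^{t(a-1)} [[a;t]] equals 0. -/
/- The ring `Aq = ℚ(q)[π]/(π²-1) ≅ ℚ(q) × ℚ(q)` (via π ↦ (1, -1), an isomorphism
since 2 is invertible).  Division/inversion is componentwise (the total fraction ring). -/
noncomputable section

abbrev Aq : Type := RatFunc ℚ × RatFunc ℚ

/-- the element `q` -/
def qA : Aq := (RatFunc.X, RatFunc.X)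

/-- the element `π`, satisfying `π² = 1` -/
def pA : Aq := (1, -1)

/-- The `(q,π)`-binomial coefficient
`[[a;t]] = (∏_{s=0}^{t-1} ((πq)^{a-s} - q^{s-a})) / (∏_{s=1}^{t} ((πq)^s - q^{-s}))`. -/
def qbinom (a : ℤ) (t : ℕ) : Aq :=
  (∏ s ∈ Finset.range t, ((pA * qA) ^ (a - (s : ℤ)) - qA ^ ((s : ℤ) - a))) /
  (∏ s ∈ Finset.range t, ((pA * qA) ^ ((s : ℤ) + 1) - qA ^ (-((s : ℤ) + 1))))

/-! Since `π ↦ (1, -1)` identifies `Aq` with `ℚ(q) × ℚ(q)`, it suffices to prove the identity in a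
field, for any `p` with `p ^ 2 = 1` in the role of `π` and any `q` that is not a root of unity.
There the sum telescopes, as in `∑_{t ≤ m} (-1)^t C(a, t) = (-1)^m C(a-1, m)`: its partial sums are
`(-1)^m p^C(m+1,2) q^(m a) [[a-1; m]]`, the inductive step being a `(q,π)`-Pascal rule. For `m = a`
this vanishes, because the numerator of `[[a-1; a]]` contains the factor `[0] = 0`. -/

open Finset

namespace QPiBinom

variable {K : Type*} [Field K] (p q : K)

/-- The `(q,π)`-integer `[n] = (πq)^n - q^(-n)`, with `p` in the role of `π`. -/
def qint (n : ℤ) : K := (p * q) ^ n - q ^ (-n)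

def numer (b : ℤ) (t : ℕ) : K := ∏ s ∈ range t, qint p q (b - s)

def denom (t : ℕ) : K := ∏ s ∈ range t, qint p q (s + 1)

def altTerm (a : ℤ) (t : ℕ) : K :=
  (-1) ^ t * p ^ t.choose 2 * q ^ ((t : ℤ) * (a - 1)) * (numer p q a t / denom p q t)

variable {p q}

theorem qint_ne_zero (hp : p ^ 2 = 1) (hq : q ≠ 0) (hq_inf : ¬IsOfFinOrder q) {n : ℕ}
    (hn : n ≠ 0) : qint p q n ≠ 0 := by
  intro h
  rw [qint, sub_eq_zero, zpow_neg, zpow_natCast, zpow_natCast] at h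
  have h2n : p ^ n * q ^ (2 * n) = 1 :=
    calc p ^ n * q ^ (2 * n) = (p * q) ^ n * q ^ n := by ring
      _ = 1 := by rw [h, inv_mul_cancel₀ (pow_ne_zero _ hq)]
  refine hq_inf (isOfFinOrder_iff_pow_eq_one.2 ⟨4 * n, by omega, ?_⟩)
  calc q ^ (4 * n) = (p ^ 2) ^ n * q ^ (4 * n) := by rw [hp, one_pow, one_mul]
    _ = (p ^ n * q ^ (2 * n)) ^ 2 := by ring
    _ = 1 := by rw [h2n, one_pow]

variable (p q)

theorem numer_succ (b : ℤ) (t : ℕ) :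
    numer p q b (t + 1) = numer p q b t * qint p q (b - t) :=
  prod_range_succ _ _

theorem numer_succ' (b : ℤ) (t : ℕ) :
    numer p q b (t + 1) = qint p q b * numer p q (b - 1) t := by
  rw [numer, prod_range_succ', mul_comm, numer]
  push_cast
  simp only [sub_zero, sub_add_eq_sub_sub_swap]

theorem numer_eq_zero_of_lt {b t : ℕ} (h : b < t) : numer p q b t = 0 :=
  prod_eq_zero (mem_range.2 h) (by simp [qint])

theorem denom_succ (t : ℕ) : denom p q (t + 1) = denom p q t * qint p q (t + 1) :=
  prod_range_succ _ _

variable {p q}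

theorem denom_ne_zero (hD : ∀ s : ℕ, qint p q (s + 1) ≠ 0) (t : ℕ) : denom p q t ≠ 0 :=
  prod_ne_zero_iff.2 fun s _ => hD s

theorem qint_pascal (hp : p ≠ 0) (hq : q ≠ 0) (a : ℤ) (m : ℕ) :
    q ^ (((m : ℤ) + 1) * (a - 1)) * qint p q a
      = p ^ (m + 1) * q ^ (((m : ℤ) + 1) * a) * qint p q (a - 1 - m)
        + q ^ ((m : ℤ) * a) * qint p q (m + 1) := by
  rw [mul_comm ((m : ℤ) + 1), mul_comm ((m : ℤ) + 1), mul_comm (m : ℤ), ← Nat.cast_add_one]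
  simp only [qint, zpow_mul, mul_zpow, zpow_sub₀ hp, zpow_sub₀ hq, zpow_neg, zpow_natCast,
    zpow_one, div_pow]
  field_simp
  ring

theorem sum_range_altTerm (hp : p ≠ 0) (hq : q ≠ 0) (hD : ∀ s : ℕ, qint p q (s + 1) ≠ 0)
    (a : ℤ) (m : ℕ) :
    ∑ t ∈ range (m + 1), altTerm p q a t
      = (-1) ^ m * p ^ (m + 1).choose 2 * q ^ ((m : ℤ) * a)
        * (numer p q (a - 1) m / denom p q m) := by
  induction m with
  | zero => simp [altTerm, numer, denom]
  | succ m ih =>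
    have hd := denom_ne_zero hD m
    have hd1 := hD m
    rw [sum_range_succ, ih, altTerm, numer_succ', numer_succ, denom_succ,
      Nat.choose_succ_succ' (m + 1), Nat.choose_one_right, pow_add]
    push_cast
    field_simp
    linear_combination -p ^ (m + 1).choose 2 * numer p q (a - 1) m * qint_pascal hp hq a m

theorem sum_range_altTerm_eq_zero (hp : p ≠ 0) (hq : q ≠ 0)
    (hD : ∀ s : ℕ, qint p q (s + 1) ≠ 0) {a : ℕ} (ha : 1 ≤ a) :
    ∑ t ∈ range (a + 1), altTerm p q a t = 0 := by
  obtain ⟨m, rfl⟩ := Nat.exists_eq_add_of_le' ha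
  rw [sum_range_altTerm hp hq hD, Nat.cast_add_one, add_sub_cancel_right,
    numer_eq_zero_of_lt p q m.lt_succ_self, zero_div, mul_zero]

theorem sum_range_altTerm_eq_zero_of_sq_eq_one (hp : p ^ 2 = 1) (hq : q ≠ 0)
    (hq_inf : ¬IsOfFinOrder q) {a : ℕ} (ha : 1 ≤ a) :
    ∑ t ∈ range (a + 1), altTerm p q a t = 0 := by
  refine sum_range_altTerm_eq_zero ?_ hq (fun s => ?_) ha
  · rintro rfl
    simp at hp
  · exact_mod_cast qint_ne_zero hp hq hq_inf s.succ_ne_zero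

end QPiBinom

open QPiBinom

theorem RatFunc.not_isOfFinOrder_X {F : Type*} [Field F] : ¬IsOfFinOrder (X : RatFunc F) := by
  intro h
  obtain ⟨n, hn, hXn⟩ := isOfFinOrder_iff_pow_eq_one.1 h
  exact RatFunc.transcendental_X.pow hn (hXn ▸ isAlgebraic_one)

theorem fst_qbinom (a : ℤ) (t : ℕ) :
    (qbinom a t).1 = numer 1 RatFunc.X a t / denom 1 RatFunc.X t := by
  simp [qbinom, numer, denom, qint, Prod.fst_prod, pA, qA, neg_sub]

theorem snd_qbinom (a : ℤ) (t : ℕ) :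
    (qbinom a t).2 = numer (-1) RatFunc.X a t / denom (-1) RatFunc.X t := by
  simp [qbinom, numer, denom, qint, Prod.snd_prod, pA, qA, neg_sub]

/-- For `a ≥ 1`, `∑_{t=0}^{a} (-1)^t π^{binom(t,2)} q^{t(a-1)} [[a;t]] = 0`. -/
theorem qbinom_alt_sum (a : ℕ) (ha : 1 ≤ a) :
    ∑ t ∈ Finset.range (a + 1),
      (-1) ^ t * pA ^ t.choose 2 * qA ^ ((t : ℤ) * ((a : ℤ) - 1)) * qbinom (a : ℤ) t = 0 := by
  ext
  · simpa [altTerm, fst_qbinom, Prod.fst_sum, Prod.pow_fst, pA, qA] using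
      sum_range_altTerm_eq_zero_of_sq_eq_one (one_pow 2) RatFunc.X_ne_zero
        RatFunc.not_isOfFinOrder_X ha
  · simpa [altTerm, snd_qbinom, Prod.snd_sum, Prod.pow_snd, pA, qA] using
      sum_range_altTerm_eq_zero_of_sq_eq_one neg_one_sq RatFunc.X_ne_zero
        RatFunc.not_isOfFinOrder_X ha
end
end

section
/- Let R be an associative algebra over Q(q)[π]/(π²-1) and let x, y ∈ R satisfy xy = πq² yx. Then for every nonnegative integer a, (x+y)^a = ∑_{t=0}^{a} q^{t(a-t)} [[a;t]] y^t x^{a-t}. -/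
/- The ring `Aq = ℚ(q)[π]/(π²-1) ≅ ℚ(q) × ℚ(q)` (via π ↦ (1, -1), an isomorphism
since 2 is invertible).  Division/inversion is componentwise (the total fraction ring). -/
noncomputable section

abbrev K : Type := RatFunc ℚ

def NK (e : K) (a : ℤ) (t : ℕ) : K :=
  ∏ s ∈ Finset.range t, ((e * RatFunc.X) ^ (a - (s : ℤ)) - RatFunc.X ^ ((s : ℤ) - a))

def DK (e : K) (t : ℕ) : K :=
  ∏ s ∈ Finset.range t, ((e * RatFunc.X) ^ ((s : ℤ) + 1) - RatFunc.X ^ (-((s : ℤ) + 1)))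

lemma e_ne (e : K) (he : e = 1 ∨ e = -1) : e ≠ 0 := by
  rcases he with h | h <;> simp [h]

lemma factor_ne (e : K) (he : e = 1 ∨ e = -1) (n : ℕ) (hn : n ≠ 0) :
    (e * RatFunc.X) ^ (n : ℤ) - RatFunc.X ^ (-(n : ℤ)) ≠ 0 := by
  intro hcon
  have hX : (RatFunc.X : K) ≠ 0 := RatFunc.X_ne_zero
  have h1 : (e * RatFunc.X) ^ (n : ℤ) = RatFunc.X ^ (-(n : ℤ)) := by
    linear_combination hcon
  have h2 : (e * RatFunc.X) ^ (n : ℤ) * RatFunc.X ^ (n : ℤ) = 1 := by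
    rw [h1, ← zpow_add₀ hX]; simp
  rw [zpow_natCast, zpow_natCast, mul_pow, mul_assoc, ← pow_add] at h2
  -- h2 : e ^ n * RatFunc.X ^ (n + n) = 1
  have hc : ∃ c : ℚ, (c = 1 ∨ c = -1) ∧ e = algebraMap (Polynomial ℚ) K (Polynomial.C c) := by
    rcases he with h | h
    · exact ⟨1, Or.inl rfl, by simp [h]⟩
    · exact ⟨-1, Or.inr rfl, by simp [h]⟩
  obtain ⟨c, hc1, rfl⟩ := hc
  rw [← RatFunc.algebraMap_X (K := ℚ)] at h2
  rw [show (1:K) = algebraMap (Polynomial ℚ) K 1 from (map_one _).symm] at h2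
  simp only [← map_pow, ← map_mul] at h2
  have h3 := RatFunc.algebraMap_injective ℚ h2
  have h4 := congrArg (Polynomial.eval 0) h3
  rw [Polynomial.eval_one, Polynomial.eval_mul, Polynomial.eval_pow, Polynomial.eval_X, Polynomial.eval_C] at h4
  rw [zero_pow (by omega), mul_zero] at h4
  exact zero_ne_one h4

lemma DK_ne (e : K) (he : e = 1 ∨ e = -1) (t : ℕ) : DK e t ≠ 0 := by
  rw [DK, Finset.prod_ne_zero_iff]
  intro s _
  have : ((s : ℤ) + 1) = ((s + 1 : ℕ) : ℤ) := by push_cast; ring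
  rw [this]
  exact factor_ne e he (s+1) (by omega)

lemma NK_succ_left (e : K) (a : ℤ) (t : ℕ) :
    NK e (a + 1) (t + 1) =
      ((e * RatFunc.X) ^ (a + 1) - RatFunc.X ^ (-(a + 1))) * NK e a t := by
  rw [NK, Finset.prod_range_succ']
  rw [mul_comm]
  congr 1
  · simp
  · rw [NK]
    refine Finset.prod_congr rfl fun s _ => ?_
    congr 1 <;> [skip; skip] <;> congr 1 <;> push_cast <;> ring

lemma NK_succ (e : K) (a : ℤ) (t : ℕ) :
    NK e a (t + 1) = NK e a t * ((e * RatFunc.X) ^ (a - t) - RatFunc.X ^ ((t : ℤ) - a)) :=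
  Finset.prod_range_succ _ _

lemma DK_succ (e : K) (t : ℕ) :
    DK e (t + 1) = DK e t * ((e * RatFunc.X) ^ ((t : ℤ) + 1) - RatFunc.X ^ (-((t : ℤ) + 1))) :=
  Finset.prod_range_succ _ _

lemma pascalK (e : K) (he : e = 1 ∨ e = -1) (a : ℤ) (t : ℕ) :
    NK e (a + 1) (t + 1) / DK e (t + 1) =
      RatFunc.X ^ (-((t : ℤ) + 1)) * (NK e a (t + 1) / DK e (t + 1)) +
        (e * RatFunc.X) ^ (a - t) * (NK e a t / DK e t) := by
  have hX : (RatFunc.X : K) ≠ 0 := RatFunc.X_ne_zero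
  have he0 : e ≠ 0 := e_ne e he
  have heX : e * RatFunc.X ≠ 0 := mul_ne_zero he0 hX
  have hD : DK e t ≠ 0 := DK_ne e he t
  have hv : (e * RatFunc.X) ^ ((t : ℤ) + 1) - RatFunc.X ^ (-((t : ℤ) + 1)) ≠ 0 := by
    have h1 : ((t : ℤ) + 1) = ((t + 1 : ℕ) : ℤ) := by push_cast; ring
    rw [h1]; exact factor_ne e he (t+1) (by omega)
  have e1 : (e * RatFunc.X) ^ (a + 1) =
      (e * RatFunc.X) ^ (a - t) * (e * RatFunc.X) ^ ((t : ℤ) + 1) := by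
    rw [← zpow_add₀ heX]; congr 1; ring
  have e2 : (RatFunc.X : K) ^ (-(a + 1)) =
      RatFunc.X ^ ((t : ℤ) - a) * RatFunc.X ^ (-((t : ℤ) + 1)) := by
    rw [← zpow_add₀ hX]; congr 1; ring
  rw [NK_succ_left, NK_succ, DK_succ, e1, e2]
  set P := (e * RatFunc.X) ^ (a - (t:ℤ)) with hP
  set Q := (e * RatFunc.X) ^ ((t:ℤ) + 1) with hQ
  set Rr := (RatFunc.X : K) ^ ((t:ℤ) - a) with hR
  set S := (RatFunc.X : K) ^ (-((t:ℤ) + 1)) with hS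
  set D := DK e t with hDD
  set M := NK e a t with hM
  field_simp
  ring

lemma NK_self (e : K) (a : ℕ) : NK e (a : ℤ) a = DK e a := by
  rw [NK, DK, ← Finset.prod_range_reflect]
  refine Finset.prod_congr rfl fun s hs => ?_
  rw [Finset.mem_range] at hs
  have h1 : ((a : ℤ)) - ((a - 1 - s : ℕ) : ℤ) = (s : ℤ) + 1 := by
    have := Nat.cast_sub (by omega : 1 + s ≤ a) (R := ℤ)
    push_cast [Nat.sub_sub] at *
    omega
  have h2 : ((a - 1 - s : ℕ) : ℤ) - (a : ℤ) = -((s : ℤ) + 1) := by omega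
  rw [h1, h2]

lemma pascal_coefK (e : K) (he : e = 1 ∨ e = -1) (a t : ℕ) (h : t < a) :
    RatFunc.X ^ ((t+1)*(a-t)) * (NK e ((a:ℤ)+1) (t+1) / DK e (t+1))
      = RatFunc.X ^ ((t+1)*(a-(t+1))) * (NK e (a:ℤ) (t+1) / DK e (t+1))
        + (e * RatFunc.X ^ 2) ^ (a-t) *
            (RatFunc.X ^ (t*(a-t)) * (NK e (a:ℤ) t / DK e t)) := by
  have hX : (RatFunc.X : K) ≠ 0 := RatFunc.X_ne_zero
  rw [pascalK e he (a:ℤ) t, mul_add]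
  congr 1
  · have hb : a - t = (a - (t+1)) + 1 := by omega
    have key : (RatFunc.X : K) ^ (t+1) * RatFunc.X ^ (-((t:ℤ)+1)) = 1 := by
      rw [← zpow_natCast (RatFunc.X : K) (t+1), ← zpow_add₀ hX,
        show ((t+1:ℕ):ℤ) + -((t:ℤ)+1) = 0 by push_cast; ring, zpow_zero]
    rw [hb, mul_add, mul_one, pow_add]
    linear_combination (RatFunc.X : K) ^ ((t+1)*(a-(t+1))) *
      (NK e (a:ℤ) (t+1) / DK e (t+1)) * key
  · have hc : ((a:ℤ) - (t:ℤ)) = ((a - t : ℕ) : ℤ) := by omega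
    rw [hc, zpow_natCast]
    ring


example (p : Aq) (n : ℤ) : (p ^ n).1 = p.1 ^ n := rfl
example (p : Aq) (n : ℤ) : (p ^ n).2 = p.2 ^ n := rfl

lemma fst_prod (f : ℕ → Aq) (t : ℕ) : (∏ s ∈ Finset.range t, f s).1 = ∏ s ∈ Finset.range t, (f s).1 :=
  map_prod (RingHom.fst _ _) _ _
lemma snd_prod (f : ℕ → Aq) (t : ℕ) : (∏ s ∈ Finset.range t, f s).2 = ∏ s ∈ Finset.range t, (f s).2 :=
  map_prod (RingHom.snd _ _) _ _

lemma qbinom_fst (a : ℤ) (t : ℕ) : (qbinom a t).1 = NK 1 a t / DK 1 t := by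
  rw [qbinom, Prod.fst_div, fst_prod, fst_prod, NK, DK]
  rfl

lemma qbinom_snd (a : ℤ) (t : ℕ) : (qbinom a t).2 = NK (-1) a t / DK (-1) t := by
  rw [qbinom, Prod.snd_div, snd_prod, snd_prod, NK, DK]
  rfl

lemma qbinom_zero (a : ℤ) : qbinom a 0 = 1 := by
  apply Prod.ext
  · rw [qbinom_fst, NK, DK]; simp
  · rw [qbinom_snd, NK, DK]; simp

lemma qbinom_self (a : ℕ) : qbinom (a : ℤ) a = 1 := by
  apply Prod.ext
  · rw [qbinom_fst, NK_self, div_self (DK_ne 1 (Or.inl rfl) a)]; rfl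
  · rw [qbinom_snd, NK_self, div_self (DK_ne (-1) (Or.inr rfl) a)]; rfl

lemma pascal_coefA (a t : ℕ) (h : t < a) :
    qA ^ ((t+1)*(a - t)) * qbinom ((a:ℤ)+1) (t+1)
      = qA ^ ((t+1)*(a-(t+1))) * qbinom (a:ℤ) (t+1)
        + (pA * qA ^ 2) ^ (a-t) * (qA ^ (t*(a-t)) * qbinom (a:ℤ) t) := by
  apply Prod.ext
  · have := pascal_coefK 1 (Or.inl rfl) a t h
    simp only [Prod.fst_add, Prod.fst_mul, Prod.pow_fst, qbinom_fst]
    simpa [qA, pA] using this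
  · have := pascal_coefK (-1) (Or.inr rfl) a t h
    simp only [Prod.snd_add, Prod.snd_mul, Prod.pow_snd, qbinom_snd]
    simpa [qA, pA] using this

lemma comm_pow (R : Type) [Ring R] [Algebra Aq R] (x y : R)
    (h : x * y = (pA * qA ^ 2) • (y * x)) (n : ℕ) :
    x ^ n * y = ((pA * qA ^ 2) ^ n) • (y * x ^ n) := by
  induction n with
  | zero => simp
  | succ n ih =>
    calc x ^ (n+1) * y = x ^ n * (x * y) := by rw [pow_succ, mul_assoc]
    _ = (pA * qA ^ 2) • (x ^ n * (y * x)) := by rw [h, mul_smul_comm]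
    _ = (pA * qA ^ 2) • ((x ^ n * y) * x) := by rw [mul_assoc]
    _ = (pA * qA ^ 2) • (((pA * qA ^ 2) ^ n • (y * x ^ n)) * x) := by rw [ih]
    _ = ((pA * qA ^ 2) ^ (n+1)) • (y * x ^ (n+1)) := by
        rw [smul_mul_assoc, smul_smul, ← pow_succ', mul_assoc, ← pow_succ]

/-- Quantum binomial formula: if `xy = πq² yx` in an `Aq`-algebra `R`, then
`(x+y)^a = ∑_{t=0}^{a} q^{t(a-t)} [[a;t]] y^t x^{a-t}`. -/
theorem quantum_binomial (R : Type) [Ring R] [Algebra Aq R] (x y : R)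
    (h : x * y = (pA * qA ^ 2) • (y * x)) (a : ℕ) :
    (x + y) ^ a =
      ∑ t ∈ Finset.range (a + 1),
        (qA ^ (t * (a - t)) * qbinom (a : ℤ) t) • (y ^ t * x ^ (a - t)) := by
  induction a with
  | zero => simp [qbinom_zero]
  | succ a ih =>
    set c : Aq := pA * qA ^ 2 with hc
    rw [pow_succ, ih, Finset.sum_mul]
    have step : ∀ t ∈ Finset.range (a+1),
        ((qA ^ (t*(a-t)) * qbinom (a:ℤ) t) • (y^t * x^(a-t))) * (x+y)
          = (qA ^ (t*(a-t)) * qbinom (a:ℤ) t) • (y^t * x^(a+1-t))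
            + (c ^ (a-t) * (qA ^ (t*(a-t)) * qbinom (a:ℤ) t)) • (y^(t+1) * x^(a-t)) := by
      intro t ht
      rw [Finset.mem_range] at ht
      rw [mul_add]
      congr 1
      · rw [smul_mul_assoc, mul_assoc, ← pow_succ,
          show a + 1 - t = (a-t) + 1 from by omega]
      · rw [smul_mul_assoc, mul_assoc, comm_pow R x y h (a-t), mul_smul_comm,
          smul_smul, mul_comm ((qA ^ (t*(a-t)) * qbinom (a:ℤ) t)) (c ^ (a-t)),
          ← mul_assoc (y^t) y, ← pow_succ]
    rw [Finset.sum_congr rfl step, Finset.sum_add_distrib]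
    -- names for terms
    set F : ℕ → R := fun t => (qA ^ (t*(a-t)) * qbinom (a:ℤ) t) • (y^t * x^(a+1-t)) with hF
    set G : ℕ → R := fun t => (c ^ (a-t) * (qA ^ (t*(a-t)) * qbinom (a:ℤ) t)) • (y^(t+1) * x^(a-t)) with hG
    set H : ℕ → R := fun t => (qA ^ (t*(a+1-t)) * qbinom ((a+1 : ℕ) : ℤ) t) • (y^t * x^(a+1-t)) with hH
    have hH0 : H 0 = F 0 := by
      simp [hH, hF, qbinom_zero]
    have hHtop : H (a+1) = G a := by
      simp only [hH, hG]
      rw [show (((a:ℕ)+1 : ℕ) : ℤ) = ((a+1 : ℕ) : ℤ) from rfl]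
      rw [qbinom_self (a+1), qbinom_self a]
      simp
    have hmid : ∀ i ∈ Finset.range a, H (i+1) = F (i+1) + G i := by
      intro i hi
      rw [Finset.mem_range] at hi
      have hp := pascal_coefA a i hi
      simp only [hH, hF, hG]
      rw [show ((a+1 : ℕ) : ℤ) = (a:ℤ)+1 from by push_cast; ring,
        show a + 1 - (i+1) = a - i from by omega, hp, add_smul]
    calc (∑ t ∈ Finset.range (a+1), F t) + (∑ t ∈ Finset.range (a+1), G t)
        = ((∑ i ∈ Finset.range a, F (i+1)) + F 0)
            + ((∑ i ∈ Finset.range a, G i) + G a) := by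
          rw [Finset.sum_range_succ' F a, Finset.sum_range_succ G a]
    _ = ((∑ i ∈ Finset.range a, H (i+1)) + H (a+1)) + H 0 := by
          rw [hH0, hHtop, Finset.sum_congr rfl hmid, Finset.sum_add_distrib]
          abel
    _ = ∑ t ∈ Finset.range (a+2), H t := by
          rw [Finset.sum_range_succ' H (a+1), Finset.sum_range_succ (fun k => H (k+1)) a]
end
end

section
/- There exists a unique symmetric bilinear form (·,·) on the free superalgebra 'f with values in Q(q)[π]/(π²-1) such that (1,1)=1, (θ_i, θ_j) = δ_{ij}(1 - π_i q_i^{-2})^{-1}, (x, y'y'') = (r(x), y'⊗y''), and (xx', y'') = (x⊗x', r(y'')) for all x, x', y', y'' ∈ 'f. -/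
/- The ring `Aq = ℚ(q)[π]/(π²-1) ≅ ℚ(q) × ℚ(q)` (via π ↦ (1, -1), an isomorphism
since 2 is invertible).  Division/inversion is componentwise (the total fraction ring). -/
noncomputable section

/-- A super Cartan datum: `I = I₀ ⊔ I₁` (parity `p : I → {0,1}`), symmetric form `Bf`,
with `Bf i i = 2 d i > 0`, `⟨i,j'⟩ = aij i j = 2(i·j)/(i·i) ∈ -ℕ` for `i ≠ j`,
even for odd `i`, and `I₁ ≠ ∅`. -/
structure SCD (I : Type) (Bf : I → I → ℤ) (p d : I → ℕ) (aij : I → I → ℤ) : Prop where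
  symm : ∀ i j, Bf i j = Bf j i
  diag : ∀ i, Bf i i = 2 * (d i : ℤ)
  dpos : ∀ i, 0 < d i
  div : ∀ i j, (d i : ℤ) * aij i j = Bf i j
  offdiag : ∀ i j, i ≠ j → aij i j ≤ 0
  par_le : ∀ i, p i ≤ 1
  odd_even : ∀ i j, p i = 1 → Even (aij i j)
  odd_nonempty : ∃ i, p i = 1

/-- the pairing `|w|·|w'|` of the weights of two words -/
def wtB {I : Type} (Bf : I → I → ℤ) (w w' : FreeMonoid I) : ℤ :=
  ((FreeMonoid.toList w).map fun i =>
    ((FreeMonoid.toList w').map fun j => Bf i j).sum).sum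

/-- the parity `p(w)` of a word -/
def par {I : Type} (p : I → ℕ) (w : FreeMonoid I) : ℕ :=
  ((FreeMonoid.toList w).map p).sum

/-- the twisting factor `q^{|w|·|w'|} π^{p(w)p(w')}` -/
def tw {I : Type} (Bf : I → I → ℤ) (p : I → ℕ) (w w' : FreeMonoid I) : Aq :=
  qA ^ wtB Bf w w' * pA ^ (par p w * par p w')

/-- the free associative superalgebra `'f` on generators `θ_i`, realized as the monoid
algebra of the free monoid on `I` (so the words are the standard homogeneous basis) -/
abbrev FF (I : Type) : Type := MonoidAlgebra Aq (FreeMonoid I)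

/-- the basis element of `'f` corresponding to a word `w` -/
def ofW {I : Type} (w : FreeMonoid I) : FF I := MonoidAlgebra.of Aq (FreeMonoid I) w

/-- the generator `θ_i` -/
def th {I : Type} (i : I) : FF I := ofW (FreeMonoid.of i)

/-- `q_i = q^{i·i/2}` -/
def qi {I : Type} (d : I → ℕ) (i : I) : Aq := qA ^ d i

/-- `π_i = π^{p(i)}` -/
def pi' {I : Type} (p : I → ℕ) (i : I) : Aq := pA ^ p i

/-- `[m]_i = ((π_i q_i)^m - q_i^{-m})/(π_i q_i - q_i^{-1})` -/
def qinti {I : Type} (p d : I → ℕ) (i : I) (m : ℕ) : Aq :=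
  ((pi' p i * qi d i) ^ m - qi d i ^ (-(m : ℤ))) / (pi' p i * qi d i - (qi d i)⁻¹)

/-- `[m]_i! = ∏_{s=1}^m [s]_i` -/
def qfacti {I : Type} (p d : I → ℕ) (i : I) (m : ℕ) : Aq :=
  ∏ s ∈ Finset.range m, qinti p d i (s + 1)

/-- the divided power `θ_i^{(n)} = θ_i^n/[n]_i!` -/
def thpow {I : Type} (p d : I → ℕ) (i : I) (n : ℕ) : FF I :=
  (qfacti p d i n)⁻¹ • th i ^ n

/-- The defining properties of the bilinear form `(·,·)` on `'f`:
`(1,1)=1`, `(θ_i,θ_j) = δ_{ij}(1-π_i q_i^{-2})^{-1}`, `(x, y'y'') = (r(x), y'⊗y'')` and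
`(xx', y'') = (x⊗x', r(y''))`, where the form on the twisted tensor square `T2` is
`(x₁⊗x₂, x₁'⊗x₂') = (x₁,x₁')(x₂,x₂')` (expressed by expanding along the basis `b2`). -/
structure FormProps (I : Type) [DecidableEq I] (Bf : I → I → ℤ) (p d : I → ℕ)
    (T2 : Type) [Ring T2] [Algebra Aq T2]
    (b2 : Module.Basis (FreeMonoid I × FreeMonoid I) Aq T2)
    (r : FF I →ₐ[Aq] T2)
    (B : FF I →ₗ[Aq] FF I →ₗ[Aq] Aq) : Prop where
  one_one : B 1 1 = 1
  gen : ∀ i j, B (th i) (th j) =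
      if i = j then (1 - pi' p i * qi d i ^ (-2 : ℤ))⁻¹ else 0
  mul_right : ∀ x y' y'', B x (y' * y'') =
      (b2.repr (r x)).sum fun pr c => c * B (ofW pr.1) y' * B (ofW pr.2) y''
  mul_left : ∀ x x' y'', B (x * x') y'' =
      (b2.repr (r y'')).sum fun pr c => c * B x (ofW pr.1) * B x' (ofW pr.2)

/-- reversal of a word -/
def revW {I : Type} (w : FreeMonoid I) : FreeMonoid I :=
  FreeMonoid.ofList (FreeMonoid.toList w).reverse

/-- the weight `|w| ∈ ℕ[I]` of a word -/
def wtF {I : Type} (w : FreeMonoid I) : I →₀ ℕ :=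
  ((FreeMonoid.toList w).map fun i => Finsupp.single i 1).sum

/-!
Write `ᵢr : 'f → 'f` for the component of `r` in `θ_i ⊗ 'f` and `ε` for the counit. The
identities force `(1, -) = ε` and `(θ_i x, y) = ν_i (x, ᵢr y)` with `ν_i = (1 - π_i q_i⁻²)⁻¹`,
so `(x, -)` must be `x · ε` for the action of `'f` on its dual in which `θ_i` acts as
`ν_i (ᵢr)ᵗ`; this proves uniqueness and serves as the definition.

Every property of `r` needed is read off from `r (θ_i x) = (θ_i ⊗ 1 + 1 ⊗ θ_i) r x` by induction
on `x`. Coassociativity of `r` turns the action into `(x x', y) = (x ⊗ x', r y)`. The identity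
`(x, y'y'') = (r x, y' ⊗ y'')` follows by induction on `x` from the twisted Leibniz rule
`ᵢr (y'y'') = ᵢr (y') y'' + q^{|y'|·i} π^{p(y')p(i)} y' ᵢr (y'')`, whose twist matches the one
in `r (θ_i x)` only because `i·j = j·i`. Symmetry then follows from uniqueness, since the
transposed form has the same properties.
-/

instance {α : Type} [DecidableEq α] : DecidableEq (FreeMonoid α) :=
  inferInstanceAs (DecidableEq (List α))

namespace FreeMonoid

variable {α : Type}

theorem of_mul_eq_of {a b : α} {w : FreeMonoid α} : of a * w = of b ↔ a = b ∧ w = 1 := by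
  rw [← toList.injective.eq_iff, toList_of_mul, toList_of, List.cons.injEq,
    ← toList.injective.eq_iff, toList_one]

end FreeMonoid

open FreeMonoid (of)

section Twist

variable {I : Type} (Bf : I → I → ℤ) (p : I → ℕ)

lemma wtB_mul_left (a b v : FreeMonoid I) : wtB Bf (a * b) v = wtB Bf a v + wtB Bf b v := by
  simp [wtB, FreeMonoid.toList_mul]

lemma wtB_mul_right (v a b : FreeMonoid I) : wtB Bf v (a * b) = wtB Bf v a + wtB Bf v b := by
  simp [wtB, FreeMonoid.toList_mul, List.sum_map_add]

lemma par_mul (a b : FreeMonoid I) : par p (a * b) = par p a + par p b := by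
  simp [par, FreeMonoid.toList_mul]

lemma qA_zpow_add (m n : ℤ) : qA ^ (m + n) = qA ^ m * qA ^ n :=
  Prod.ext (zpow_add₀ RatFunc.X_ne_zero m n) (zpow_add₀ RatFunc.X_ne_zero m n)

@[simp] lemma tw_one_left (w : FreeMonoid I) : tw Bf p 1 w = 1 := by simp [tw, wtB, par]

def twLeft (v : FreeMonoid I) : FreeMonoid I →* Aq where
  toFun w := tw Bf p v w
  map_one' := by simp [tw, wtB, par]
  map_mul' a b := by
    simp only [tw, wtB_mul_right, par_mul, qA_zpow_add, Nat.mul_add, pow_add]; ring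

def twRight (v : FreeMonoid I) : FreeMonoid I →* Aq where
  toFun w := tw Bf p w v
  map_one' := by simp [tw, wtB, par]
  map_mul' a b := by
    simp only [tw, wtB_mul_left, par_mul, qA_zpow_add, Nat.add_mul, pow_add]; ring

lemma twRight_of_eq_twLeft_of {Bf} (hsymm : ∀ i j, Bf i j = Bf j i) (i : I) :
    twRight Bf p (of i) = twLeft Bf p (of i) :=
  FreeMonoid.hom_eq fun j => by
    simp [twRight, twLeft, tw, wtB, par, hsymm j i, Nat.mul_comm]

end Twist

section FreeAlgebra

variable {I : Type}

lemma ofW_one : ofW (1 : FreeMonoid I) = 1 := map_one (MonoidAlgebra.of Aq (FreeMonoid I))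

lemma ofW_mul (u v : FreeMonoid I) : ofW (u * v) = ofW u * ofW v :=
  map_mul (MonoidAlgebra.of Aq (FreeMonoid I)) u v

lemma th_mul_ofW (i : I) (w : FreeMonoid I) : th i * ofW w = ofW (of i * w) :=
  (ofW_mul _ _).symm

lemma FF.linearMap_ext {M : Type} [AddCommMonoid M] [Module Aq M] {f g : FF I →ₗ[Aq] M}
    (h : ∀ w, f (ofW w) = g (ofW w)) : f = g :=
  MonoidAlgebra.lhom_ext' fun w => LinearMap.ext_ring (h w)

@[elab_as_elim]
theorem FF.induction_on {motive : FF I → Prop} (x : FF I) (one : motive 1)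
    (th_mul : ∀ i x, motive x → motive (th i * x))
    (add : ∀ x y, motive x → motive y → motive (x + y))
    (smul : ∀ (c : Aq) x, motive x → motive (c • x)) : motive x := by
  induction x using MonoidAlgebra.induction_on with
  | of w =>
    induction w using FreeMonoid.inductionOn' with
    | one => change motive (ofW 1); rw [ofW_one]; exact one
    | of_mul i w ih => change motive (ofW (of i * w)); rw [← th_mul_ofW]; exact th_mul i _ ih
  | add x y hx hy => exact add x y hx hy
  | smul c x hx => exact smul c x hx

def coeffAt (w : FreeMonoid I) : Module.Dual Aq (FF I) :=
  Finsupp.lapply w ∘ₗ (MonoidAlgebra.coeffLinearEquiv Aq).toLinearMap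

/-- On homogeneous `x`, `charScale (twLeft Bf p v) x = q^{|v|·|x|} π^{p(v)p(x)} x`. -/
def charScale (χ : FreeMonoid I →* Aq) : FF I →ₐ[Aq] FF I :=
  MonoidAlgebra.lift Aq (FF I) (FreeMonoid I)
    { toFun w := χ w • ofW w
      map_one' := by simp [ofW_one]
      map_mul' u v := by rw [map_mul, ofW_mul, smul_mul_smul_comm] }

variable (χ χ' : FreeMonoid I →* Aq)

lemma charScale_ofW (w : FreeMonoid I) : charScale χ (ofW w) = χ w • ofW w :=
  MonoidAlgebra.lift_of _ w

lemma charScale_th (i : I) : charScale χ (th i) = χ (of i) • th i :=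
  charScale_ofW χ (of i)

lemma charScale_comm (x : FF I) : charScale χ (charScale χ' x) = charScale χ' (charScale χ x) := by
  suffices (charScale χ).toLinearMap ∘ₗ (charScale χ').toLinearMap =
      (charScale χ').toLinearMap ∘ₗ (charScale χ).toLinearMap from LinearMap.congr_fun this x
  refine FF.linearMap_ext fun w => ?_
  simp [charScale_ofW, smul_smul, mul_comm]

lemma coeffAt_ofW [DecidableEq I] (w a : FreeMonoid I) :
    coeffAt w (ofW a) = if a = w then 1 else 0 := by
  simp [coeffAt, ofW, Finsupp.single_apply]

@[simp] lemma coeffAt_one_one : coeffAt 1 (1 : FF I) = 1 := by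
  classical
  rw [← ofW_one, coeffAt_ofW, if_pos rfl]

lemma coeffAt_one_comp_mulLeft (i : I) : coeffAt 1 ∘ₗ LinearMap.mulLeft Aq (th i) = 0 :=
  FF.linearMap_ext fun w => by classical simp [th_mul_ofW, coeffAt_ofW]

lemma coeffAt_of_comp_mulLeft [DecidableEq I] (i j : I) :
    coeffAt (of i) ∘ₗ LinearMap.mulLeft Aq (th j) = if j = i then coeffAt 1 else 0 :=
  FF.linearMap_ext fun w => by
    split_ifs with h <;> simp [th_mul_ofW, coeffAt_ofW, FreeMonoid.of_mul_eq_of, h]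

lemma coeffAt_one_mul (x y : FF I) : coeffAt 1 (x * y) = coeffAt 1 x * coeffAt 1 y := by
  suffices (LinearMap.mul Aq (FF I)).compr₂ (coeffAt 1) =
      (LinearMap.mul Aq Aq).compl₁₂ (coeffAt 1) (coeffAt 1) from
    LinearMap.congr_fun₂ this x y
  classical
  refine FF.linearMap_ext fun u => FF.linearMap_ext fun v => ?_
  simp only [LinearMap.compr₂_apply, LinearMap.compl₁₂_apply, LinearMap.mul_apply',
    ← ofW_mul, coeffAt_ofW]
  simp only [mul_eq_one']
  split_ifs <;> simp_all

lemma coeffAt_comp_charScale (w : FreeMonoid I) :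
    coeffAt w ∘ₗ (charScale χ).toLinearMap = χ w • coeffAt w := by
  classical
  refine FF.linearMap_ext fun a => ?_
  simp only [LinearMap.comp_apply, AlgHom.toLinearMap_apply, charScale_ofW, map_smul,
    coeffAt_ofW, LinearMap.smul_apply]
  split_ifs with h <;> simp [h]

lemma coeffAt_charScale (w : FreeMonoid I) (x : FF I) :
    coeffAt w (charScale χ x) = χ w * coeffAt w x := by
  simpa using LinearMap.congr_fun (coeffAt_comp_charScale χ w) x

end FreeAlgebra

section Contract

variable {I : Type} (Bf : I → I → ℤ) (p : I → ℕ) {T2 : Type} [Ring T2] [Algebra Aq T2]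
  (b2 : Module.Basis (FreeMonoid I × FreeMonoid I) Aq T2) (r : FF I →ₐ[Aq] T2)

/-- `T2` is the twisted tensor square with basis `b2 (w₁, w₂) = w₁ ⊗ w₂`, and `r` is the
algebra map `θ_i ↦ θ_i ⊗ 1 + 1 ⊗ θ_i`. -/
structure IsTwistedCoproduct : Prop where
  basis_one : b2 (1, 1) = 1
  basis_mul : ∀ w1 w2 w1' w2', b2 (w1, w2) * b2 (w1', w2')
    = tw Bf p w2 w1' • b2 (w1 * w1', w2 * w2')
  map_th : ∀ i, r (th i) = b2 (of i, 1) + b2 (1, of i)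

def sliceFst (φ : Module.Dual Aq (FF I)) : T2 →ₗ[Aq] FF I :=
  b2.constr Aq fun z => φ (ofW z.1) • ofW z.2

/-- `contract φ = (φ ⊗ id) ∘ r`. -/
def contract : Module.Dual Aq (FF I) →ₗ[Aq] Module.End Aq (FF I) where
  toFun φ := sliceFst b2 φ ∘ₗ r.toLinearMap
  map_add' φ ψ := by
    rw [← LinearMap.add_comp, sliceFst, sliceFst, sliceFst, ← map_add]
    congr 2; funext z; simp [add_smul]
  map_smul' c φ := by
    rw [RingHom.id_apply, ← LinearMap.smul_comp, sliceFst, sliceFst, ← map_smul]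
    congr 2; funext z; simp [mul_smul]

lemma contract_apply (φ : Module.Dual Aq (FF I)) (x : FF I) :
    contract b2 r φ x = sliceFst b2 φ (r x) := rfl

lemma apply_contract (φ ψ : Module.Dual Aq (FF I)) (x : FF I) :
    ψ (contract b2 r φ x) =
      (b2.repr (r x)).sum fun z c => c * φ (ofW z.1) * ψ (ofW z.2) := by
  rw [contract_apply, sliceFst, Module.Basis.constr_apply, map_finsuppSum]
  simp only [map_smul, smul_eq_mul, mul_assoc]

lemma apply_contract_flip (B : FF I →ₗ[Aq] FF I →ₗ[Aq] Aq) (x y' y'' : FF I) :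
    B (contract b2 r (B.flip y') x) y'' =
      (b2.repr (r x)).sum fun z c => c * B (ofW z.1) y' * B (ofW z.2) y'' :=
  apply_contract b2 r (B.flip y') (B.flip y'') x

variable {Bf p b2 r} (hr : IsTwistedCoproduct Bf p b2 r)
include hr

lemma contract_one (φ : Module.Dual Aq (FF I)) : contract b2 r φ 1 = φ 1 • 1 := by
  rw [contract_apply, map_one, ← hr.basis_one, sliceFst, Module.Basis.constr_basis, ofW_one]

lemma sliceFst_basis_of_mul (φ : Module.Dual Aq (FF I)) (i : I) (t : T2) :
    sliceFst b2 φ (b2 (of i, 1) * t) = sliceFst b2 (φ ∘ₗ LinearMap.mulLeft Aq (th i)) t := by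
  suffices sliceFst b2 φ ∘ₗ LinearMap.mulLeft Aq (b2 (of i, 1)) =
      sliceFst b2 (φ ∘ₗ LinearMap.mulLeft Aq (th i)) from LinearMap.congr_fun this t
  refine b2.ext fun z => ?_
  simp [sliceFst, hr.basis_mul, ofW_mul, th]

lemma sliceFst_basis_mul_of (φ : Module.Dual Aq (FF I)) (i : I) (t : T2) :
    sliceFst b2 φ (b2 (1, of i) * t) =
      th i * sliceFst b2 (φ ∘ₗ (charScale (twLeft Bf p (of i))).toLinearMap) t := by
  suffices sliceFst b2 φ ∘ₗ LinearMap.mulLeft Aq (b2 (1, of i)) =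
      LinearMap.mulLeft Aq (th i) ∘ₗ
        sliceFst b2 (φ ∘ₗ (charScale (twLeft Bf p (of i))).toLinearMap) from
    LinearMap.congr_fun this t
  refine b2.ext fun z => ?_
  simp [sliceFst, hr.basis_mul, ofW_mul, th, charScale_ofW, twLeft, smul_smul]

/-- `r (θ_i x) = (θ_i ⊗ 1 + 1 ⊗ θ_i) r x`, seen through `contract`. -/
lemma contract_th_mul (φ : Module.Dual Aq (FF I)) (i : I) (x : FF I) :
    contract b2 r φ (th i * x) =
      contract b2 r (φ ∘ₗ LinearMap.mulLeft Aq (th i)) x +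
        th i * contract b2 r (φ ∘ₗ (charScale (twLeft Bf p (of i))).toLinearMap) x := by
  rw [contract_apply, map_mul, hr.map_th, add_mul, map_add, sliceFst_basis_of_mul hr,
    sliceFst_basis_mul_of hr, contract_apply, contract_apply]

lemma contract_th (φ : Module.Dual Aq (FF I)) (i : I) :
    contract b2 r φ (th i) = φ (th i) • 1 + φ 1 • th i := by
  rw [← mul_one (th i), contract_th_mul hr, contract_one hr, contract_one hr]
  simp [map_one]

end Contract

section Coalgebra

variable {I : Type} {Bf : I → I → ℤ} {p : I → ℕ} {T2 : Type} [Ring T2]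
  [Algebra Aq T2] {b2 : Module.Basis (FreeMonoid I × FreeMonoid I) Aq T2} {r : FF I →ₐ[Aq] T2}
  (hr : IsTwistedCoproduct Bf p b2 r)
include hr

lemma contract_coeffAt_one (x : FF I) : contract b2 r (coeffAt 1) x = x := by
  induction x using FF.induction_on with
  | one => simp [contract_one hr]
  | th_mul i x ih =>
    rw [contract_th_mul hr, coeffAt_one_comp_mulLeft, coeffAt_comp_charScale, map_one, one_smul,
      ih, map_zero, LinearMap.zero_apply, zero_add]
  | add x y hx hy => rw [map_add, hx, hy]
  | smul c x hx => rw [map_smul, hx]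

/-- `r` respects the grading: `r ∘ σ_χ = (σ_χ ⊗ σ_χ) ∘ r` for `σ_χ = charScale χ`. -/
lemma contract_charScale (χ : FreeMonoid I →* Aq) (φ : Module.Dual Aq (FF I)) (x : FF I) :
    contract b2 r φ (charScale χ x) =
      charScale χ (contract b2 r (φ ∘ₗ (charScale χ).toLinearMap) x) := by
  induction x using FF.induction_on generalizing φ with
  | one => simp [contract_one hr]
  | th_mul i x ih =>
    have hL : (φ ∘ₗ (charScale χ).toLinearMap) ∘ₗ LinearMap.mulLeft Aq (th i) =
        χ (of i) • ((φ ∘ₗ LinearMap.mulLeft Aq (th i)) ∘ₗ (charScale χ).toLinearMap) :=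
      LinearMap.ext fun x => by simp [charScale_th]
    have hσ : (φ ∘ₗ (charScale χ).toLinearMap) ∘ₗ (charScale (twLeft Bf p (of i))).toLinearMap =
        (φ ∘ₗ (charScale (twLeft Bf p (of i))).toLinearMap) ∘ₗ (charScale χ).toLinearMap :=
      LinearMap.ext fun x => by simp [charScale_comm]
    rw [map_mul, charScale_th, smul_mul_assoc, map_smul, contract_th_mul hr, contract_th_mul hr,
      ih, ih, hL, hσ, map_add, map_mul, charScale_th, map_smul, LinearMap.smul_apply, map_smul]
    simp [smul_add]
  | add x y hx hy => simp only [map_add, hx, hy]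
  | smul c x hx => simp only [map_smul, hx]

/-- Coassociativity of `r`. -/
lemma contract_comp_contract (φ ψ : Module.Dual Aq (FF I)) (x : FF I) :
    contract b2 r (ψ ∘ₗ contract b2 r φ) x = contract b2 r ψ (contract b2 r φ x) := by
  induction x using FF.induction_on generalizing φ ψ with
  | one => simp [contract_one hr, smul_smul]
  | th_mul i x ih =>
    have hL : (ψ ∘ₗ contract b2 r φ) ∘ₗ LinearMap.mulLeft Aq (th i) =
        ψ ∘ₗ contract b2 r (φ ∘ₗ LinearMap.mulLeft Aq (th i)) +
          (ψ ∘ₗ LinearMap.mulLeft Aq (th i)) ∘ₗ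
            contract b2 r (φ ∘ₗ (charScale (twLeft Bf p (of i))).toLinearMap) :=
      LinearMap.ext fun x => by simp [contract_th_mul hr]
    have hσ : (ψ ∘ₗ contract b2 r φ) ∘ₗ (charScale (twLeft Bf p (of i))).toLinearMap =
        (ψ ∘ₗ (charScale (twLeft Bf p (of i))).toLinearMap) ∘ₗ
          contract b2 r (φ ∘ₗ (charScale (twLeft Bf p (of i))).toLinearMap) :=
      LinearMap.ext fun x => by simp [contract_charScale hr]
    rw [contract_th_mul hr, hL, hσ, map_add, LinearMap.add_apply, ih, ih, ih,
      contract_th_mul hr, map_add, contract_th_mul hr, add_assoc]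
  | add x y hx hy => simp only [map_add, hx, hy]
  | smul c x hx => simp only [map_smul, hx]

end Coalgebra

section SkewDerivation

variable {I : Type} {Bf : I → I → ℤ} {p : I → ℕ} {T2 : Type} [Ring T2] [Algebra Aq T2]
  (b2 : Module.Basis (FreeMonoid I × FreeMonoid I) Aq T2) (r : FF I →ₐ[Aq] T2)

/-- Lusztig's `ᵢr`: the component of `r x` in `θ_i ⊗ 'f`. -/
def skewDeriv (i : I) : Module.End Aq (FF I) := contract b2 r (coeffAt (of i))

variable {b2 r} (hr : IsTwistedCoproduct Bf p b2 r)
include hr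

lemma skewDeriv_one (i : I) : skewDeriv b2 r i 1 = 0 := by
  classical
  rw [skewDeriv, contract_one hr, ← ofW_one, coeffAt_ofW, if_neg (FreeMonoid.one_ne_of i),
    zero_smul]

lemma skewDeriv_th_mul [DecidableEq I] (i j : I) (x : FF I) :
    skewDeriv b2 r i (th j * x) =
      (if j = i then x else 0) + tw Bf p (of j) (of i) • (th j * skewDeriv b2 r i x) := by
  rw [skewDeriv, contract_th_mul hr, coeffAt_of_comp_mulLeft, coeffAt_comp_charScale]
  split_ifs <;> simp [contract_coeffAt_one hr, twLeft]

lemma skewDeriv_mul (i : I) (x y : FF I) :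
    skewDeriv b2 r i (x * y) =
      skewDeriv b2 r i x * y + charScale (twRight Bf p (of i)) x * skewDeriv b2 r i y := by
  classical
  induction x using FF.induction_on with
  | one => simp [skewDeriv_one hr]
  | th_mul j x ih =>
    rw [mul_assoc, skewDeriv_th_mul hr, ih, skewDeriv_th_mul hr, map_mul, charScale_th]
    split_ifs <;> simp [twRight, add_mul, mul_add, mul_assoc, add_assoc]
  | add x x' hx hx' => simp only [add_mul, map_add, hx, hx']; abel
  | smul c x hx => simp only [smul_mul_assoc, map_smul, hx, smul_add]

lemma skewDeriv_charScale (χ : FreeMonoid I →* Aq) (i : I) (x : FF I) :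
    skewDeriv b2 r i (charScale χ x) = χ (of i) • charScale χ (skewDeriv b2 r i x) := by
  rw [skewDeriv, contract_charScale hr, coeffAt_comp_charScale, map_smul, LinearMap.smul_apply,
    map_smul]

end SkewDerivation

section Form

variable {I : Type} {Bf : I → I → ℤ} {p : I → ℕ} {T2 : Type} [Ring T2] [Algebra Aq T2]
  (b2 : Module.Basis (FreeMonoid I × FreeMonoid I) Aq T2) (r : FF I →ₐ[Aq] T2) (ν : I → Aq)

def dualAction : FF I →ₐ[Aq] Module.End Aq (Module.Dual Aq (FF I)) :=
  MonoidAlgebra.lift Aq _ (FreeMonoid I)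
    (FreeMonoid.lift fun i => ν i • Module.Dual.transpose (skewDeriv b2 r i))

def bform : FF I →ₗ[Aq] Module.Dual Aq (FF I) :=
  LinearMap.applyₗ (coeffAt 1) ∘ₗ (dualAction b2 r ν).toLinearMap

lemma bform_apply (x : FF I) : bform b2 r ν x = dualAction b2 r ν x (coeffAt 1) := rfl

lemma dualAction_th (i : I) (φ : Module.Dual Aq (FF I)) :
    dualAction b2 r ν (th i) φ = ν i • φ ∘ₗ skewDeriv b2 r i := by
  simp [dualAction, th, ofW, Module.Dual.transpose_apply]

lemma bform_one : bform b2 r ν 1 = coeffAt 1 := by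
  rw [bform_apply, map_one, Module.End.one_apply]

lemma bform_th_mul (i : I) (x y : FF I) :
    bform b2 r ν (th i * x) y = ν i * bform b2 r ν x (skewDeriv b2 r i y) := by
  rw [bform_apply, map_mul, Module.End.mul_apply, dualAction_th, ← bform_apply]; rfl

variable {b2 r ν} (hr : IsTwistedCoproduct Bf p b2 r)
include hr

lemma bform_th_th [DecidableEq I] (i j : I) :
    bform b2 r ν (th i) (th j) = if i = j then ν i else 0 := by
  rw [← mul_one (th i), bform_th_mul, bform_one, skewDeriv, contract_th hr, th, ← ofW_one]
  simp only [coeffAt_ofW, FreeMonoid.of_injective.eq_iff, map_add, map_smul]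
  split_ifs <;> simp_all [FreeMonoid.of_ne_one, eq_comm]

lemma bform_charScale (χ : FreeMonoid I →* Aq) (x y : FF I) :
    bform b2 r ν (charScale χ x) y = bform b2 r ν x (charScale χ y) := by
  induction x using FF.induction_on generalizing y with
  | one => simp [bform_one, coeffAt_charScale]
  | th_mul i x ih =>
    rw [map_mul, charScale_th, smul_mul_assoc, map_smul, LinearMap.smul_apply, bform_th_mul,
      bform_th_mul, ih, skewDeriv_charScale hr, map_smul, smul_eq_mul]
    ring
  | add x x' hx hx' => simp only [map_add, LinearMap.add_apply, hx, hx']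
  | smul c x hx => simp only [map_smul, LinearMap.smul_apply, hx]

lemma dualAction_apply (x : FF I) (φ : Module.Dual Aq (FF I)) :
    dualAction b2 r ν x φ = φ ∘ₗ contract b2 r (bform b2 r ν x) := by
  induction x using FF.induction_on generalizing φ with
  | one => exact LinearMap.ext fun y => by simp [bform_one, contract_coeffAt_one hr]
  | th_mul i x ih =>
    have hB : bform b2 r ν (th i * x) = ν i • bform b2 r ν x ∘ₗ skewDeriv b2 r i :=
      LinearMap.ext fun y => by simp [bform_th_mul]
    refine LinearMap.ext fun y => ?_
    rw [map_mul, Module.End.mul_apply, dualAction_th, ih, hB, map_smul, skewDeriv]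
    simp only [LinearMap.smul_apply, LinearMap.comp_apply, contract_comp_contract hr, map_smul]
  | add x x' hx hx' => simp [hx, hx', LinearMap.comp_add]
  | smul c x hx => simp [hx, LinearMap.comp_smul]

lemma bform_mul_left (x x' y : FF I) :
    bform b2 r ν (x * x') y = bform b2 r ν x' (contract b2 r (bform b2 r ν x) y) := by
  rw [bform_apply, map_mul, Module.End.mul_apply, ← bform_apply, dualAction_apply hr]; rfl

lemma bform_mul_right (hsymm : ∀ i j, Bf i j = Bf j i) (x y' y'' : FF I) :
    bform b2 r ν x (y' * y'') =
      bform b2 r ν (contract b2 r ((bform b2 r ν).flip y') x) y'' := by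
  induction x using FF.induction_on generalizing y' y'' with
  | one => simp [bform_one, contract_one hr, coeffAt_one_mul]
  | th_mul i x ih =>
    have hL : (bform b2 r ν).flip y' ∘ₗ LinearMap.mulLeft Aq (th i) =
        ν i • (bform b2 r ν).flip (skewDeriv b2 r i y') :=
      LinearMap.ext fun z => by simp [bform_th_mul]
    have hσ : (bform b2 r ν).flip y' ∘ₗ (charScale (twLeft Bf p (of i))).toLinearMap =
        (bform b2 r ν).flip (charScale (twLeft Bf p (of i)) y') :=
      LinearMap.ext fun z => by simp [bform_charScale hr]
    rw [bform_th_mul, skewDeriv_mul hr, map_add, ih, ih, contract_th_mul hr, hL, hσ,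
      twRight_of_eq_twLeft_of p hsymm]
    simp [bform_th_mul, mul_add]
  | add x x' hx hx' => simp only [map_add, LinearMap.add_apply, hx, hx']
  | smul c x hx => simp only [map_smul, LinearMap.smul_apply, hx]

end Form

section Characterization

variable {I : Type} [DecidableEq I] {Bf : I → I → ℤ} {p d : I → ℕ} {T2 : Type} [Ring T2]
  [Algebra Aq T2] {b2 : Module.Basis (FreeMonoid I × FreeMonoid I) Aq T2} {r : FF I →ₐ[Aq] T2}
  {B : FF I →ₗ[Aq] FF I →ₗ[Aq] Aq}

lemma FormProps.mul_right_eq_contract (h : FormProps I Bf p d T2 b2 r B) (x y' y'' : FF I) :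
    B x (y' * y'') = B (contract b2 r (B.flip y') x) y'' := by
  rw [h.mul_right, apply_contract_flip]

lemma FormProps.mul_left_eq_contract (h : FormProps I Bf p d T2 b2 r B) (x x' y : FF I) :
    B (x * x') y = B x' (contract b2 r (B x) y) := by
  rw [h.mul_left, apply_contract]

lemma FormProps.flip (h : FormProps I Bf p d T2 b2 r B) : FormProps I Bf p d T2 b2 r B.flip where
  one_one := h.one_one
  gen i j := by
    rw [LinearMap.flip_apply, h.gen]
    split_ifs <;> simp_all
  mul_right x y' y'' := h.mul_left y' y'' x
  mul_left x x' y := h.mul_right y x x'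

theorem formProps_bform (hr : IsTwistedCoproduct Bf p b2 r) (hsymm : ∀ i j, Bf i j = Bf j i) :
    FormProps I Bf p d T2 b2 r (bform b2 r fun i => (1 - pi' p i * qi d i ^ (-2 : ℤ))⁻¹) where
  one_one := by rw [bform_one, coeffAt_one_one]
  gen := bform_th_th hr
  mul_right x y' y'' := by
    rw [bform_mul_right hr hsymm, apply_contract_flip]
  mul_left x x' y := by rw [bform_mul_left hr, apply_contract]

variable (hr : IsTwistedCoproduct Bf p b2 r)
include hr

lemma FormProps.apply_one_left (h : FormProps I Bf p d T2 b2 r B) : B 1 = coeffAt 1 := by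
  have h_th (j : I) : B 1 (th j) = 0 := by
    -- `(1, θ_j) = (1 · 1, θ_j) = 2 (1, θ_j)`
    have := h.mul_left_eq_contract 1 1 (th j)
    rw [mul_one, contract_th hr, map_add, map_smul, map_smul, h.one_one] at this
    linear_combination -this
  refine LinearMap.ext fun y => ?_
  induction y using FF.induction_on with
  | one => rw [h.one_one, coeffAt_one_one]
  | th_mul j y ih =>
    rw [h.mul_right_eq_contract, contract_one hr, LinearMap.flip_apply, h_th, zero_smul,
      map_zero, LinearMap.zero_apply]
    exact (LinearMap.congr_fun (coeffAt_one_comp_mulLeft j) y).symm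
  | add y y' hy hy' => rw [map_add, map_add, hy, hy']
  | smul c y hy => rw [map_smul, map_smul, hy]

lemma FormProps.apply_th_left (h : FormProps I Bf p d T2 b2 r B) (i : I) :
    B (th i) = (1 - pi' p i * qi d i ^ (-2 : ℤ))⁻¹ • coeffAt (of i) := by
  have h_one : B (th i) 1 = 0 := by
    have := h.mul_right_eq_contract (th i) 1 1
    rw [mul_one, contract_th hr, LinearMap.flip_apply, LinearMap.flip_apply, map_add, map_smul,
      map_smul, LinearMap.add_apply, LinearMap.smul_apply, LinearMap.smul_apply,
      h.one_one] at this
    linear_combination -this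
  refine LinearMap.ext fun y => ?_
  induction y using FF.induction_on with
  | one =>
    rw [h_one, LinearMap.smul_apply, ← ofW_one, coeffAt_ofW, if_neg (FreeMonoid.one_ne_of i),
      smul_zero]
  | th_mul j y ih =>
    rw [h.mul_right_eq_contract, contract_th hr, LinearMap.flip_apply, LinearMap.flip_apply,
      map_add, map_smul, map_smul, LinearMap.add_apply, LinearMap.smul_apply,
      LinearMap.smul_apply, h.gen, h.apply_one_left hr, LinearMap.smul_apply]
    have hδ := LinearMap.congr_fun (coeffAt_of_comp_mulLeft i j) y
    have hε : coeffAt 1 (th j) = 0 := by rw [th, coeffAt_ofW, if_neg (FreeMonoid.of_ne_one j)]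
    simp only [LinearMap.comp_apply, LinearMap.mulLeft_apply] at hδ
    rcases eq_or_ne j i with rfl | hji
    · simp_all
    · simp_all [Ne.symm hji]
  | add y y' hy hy' => rw [map_add, map_add, hy, hy']
  | smul c y hy => rw [map_smul, map_smul, hy]

theorem FormProps.unique {B' : FF I →ₗ[Aq] FF I →ₗ[Aq] Aq} (h : FormProps I Bf p d T2 b2 r B)
    (h' : FormProps I Bf p d T2 b2 r B') : B = B' := by
  refine LinearMap.ext fun x => ?_
  induction x using FF.induction_on with
  | one => rw [h.apply_one_left hr, h'.apply_one_left hr]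
  | th_mul i x ih =>
    refine LinearMap.ext fun y => ?_
    rw [h.mul_left_eq_contract, h'.mul_left_eq_contract, ih, h.apply_th_left hr,
      h'.apply_th_left hr]
  | add x x' hx hx' => rw [map_add, map_add, hx, hx']
  | smul c x hx => rw [map_smul, map_smul, hx]

end Characterization

/-- Existence and uniqueness of the symmetric bilinear form on `'f` with `(1,1)=1`,
`(θ_i,θ_j) = δ_{ij}(1-π_i q_i^{-2})^{-1}`, `(x,y'y'') = (r(x), y'⊗y'')` and
`(xx',y'') = (x⊗x', r(y''))`. -/
theorem bilinear_form_exists_unique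
    (I : Type) [DecidableEq I] (Bf : I → I → ℤ) (p d : I → ℕ) (aij : I → I → ℤ)
    (hSCD : SCD I Bf p d aij)
    (T2 : Type) [Ring T2] [Algebra Aq T2]
    (b2 : Module.Basis (FreeMonoid I × FreeMonoid I) Aq T2)
    (hone : b2 (1, 1) = 1)
    (hmul : ∀ w1 w2 w1' w2', b2 (w1, w2) * b2 (w1', w2')
        = tw Bf p w2 w1' • b2 (w1 * w1', w2 * w2'))
    (r : FF I →ₐ[Aq] T2)
    (hr : ∀ i, r (th i) = b2 (FreeMonoid.of i, 1) + b2 (1, FreeMonoid.of i)) :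
    ∃! B : FF I →ₗ[Aq] FF I →ₗ[Aq] Aq,
      FormProps I Bf p d T2 b2 r B ∧ ∀ x y, B x y = B y x := by
  have hcop : IsTwistedCoproduct Bf p b2 r := ⟨hone, hmul, hr⟩
  have hB := formProps_bform (d := d) hcop hSCD.symm
  refine ⟨_, ⟨hB, fun x y => ?_⟩, fun B' ⟨hB', _⟩ => hB'.unique hcop hB⟩
  rw [← LinearMap.flip_apply, hB.flip.unique hcop hB]
end
end
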